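/- Lower semicontinuity of angles under a lower curvature bound (Proposition 3.4, curvature ≥ 0 case). Let X be a proper metric space in which every pair of points is joined by a unit-speed shortest path and in which every point has a neighborhood that is a region of curvature ≥ 0. Let γₙ, γ : [0,T] → X and σₙ, σ : [0,S] → X (T, S > 0) be unit-speed geodesics with γₙ(0) = σₙ(0) for every n and γ(0) = σ(0), and suppose γₙ → γ uniformly on [0,T] and σₙ → σ uniformly on [0,S]. Then ∠⁺(γ, σ) ≤ liminf_{n→∞} ∠⁺(γₙ, σₙ). -/

import Mathlib

open Filter Topology Metric Set

noncomputable section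

/-- `γ` is a unit-speed geodesic (shortest path) on the interval `[0, T]`:
the distance between any two of its points equals the parameter difference. -/
def IsUnitSpeedGeodesicOn {X : Type*} [MetricSpace X] (γ : ℝ → X) (T : ℝ) : Prop :=
  ∀ t ∈ Set.Icc (0:ℝ) T, ∀ t' ∈ Set.Icc (0:ℝ) T, dist (γ t) (γ t') = |t - t'|

/-- The Euclidean comparison angle `∠⁰_p(x, y)` at the vertex `p`. -/
def compAngle {X : Type*} [MetricSpace X] (p x y : X) : ℝ :=
  Real.arccos ((dist p x ^ 2 + dist p y ^ 2 - dist x y ^ 2) /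
    (2 * dist p x * dist p y))

/-- The upper angle `∠⁺(γ, η)` between two geodesics with `γ 0 = η 0`:
the limsup of comparison angles `∠⁰_{γ 0}(γ t, η s)` as `(t, s) → (0⁺, 0⁺)`. -/
def upperAngle {X : Type*} [MetricSpace X] (γ η : ℝ → X) : ℝ :=
  Filter.limsup (fun ts : ℝ × ℝ => compAngle (γ 0) (γ ts.1) (η ts.2))
    ((𝓝[>] (0:ℝ)) ×ˢ (𝓝[>] (0:ℝ)))

/-- The lower angle `∠⁻(γ, η)`: liminf of comparison angles. -/
def lowerAngle {X : Type*} [MetricSpace X] (γ η : ℝ → X) : ℝ :=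
  Filter.liminf (fun ts : ℝ × ℝ => compAngle (γ 0) (γ ts.1) (η ts.2))
    ((𝓝[>] (0:ℝ)) ×ˢ (𝓝[>] (0:ℝ)))

/-- `U` is a region of curvature bounded by `0` in the comparison sense, where
`rel` is `≤` (curvature `≤ 0`) or `≥` (curvature `≥ 0`): any two points of `U`
are joined by a unit-speed shortest path with image in `U`, and for every
geodesic triangle contained in `U` and every Euclidean comparison triangle,
distances between pairs of points on the sides are related by `rel` to the
distances between the corresponding comparison points. -/
def IsCurvRegion {X : Type*} [MetricSpace X] (rel : ℝ → ℝ → Prop) (U : Set X) : Prop :=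
  (∀ x ∈ U, ∀ y ∈ U, ∃ γ : ℝ → X, IsUnitSpeedGeodesicOn γ (dist x y) ∧
    γ 0 = x ∧ γ (dist x y) = y ∧ ∀ t ∈ Set.Icc (0:ℝ) (dist x y), γ t ∈ U) ∧
  (∀ x ∈ U, ∀ y ∈ U, ∀ z ∈ U, ∀ p : Fin 3 → ℝ → X,
    (∀ i, IsUnitSpeedGeodesicOn (p i) (![dist x y, dist x z, dist y z] i) ∧
      p i 0 = (![(x, y), (x, z), (y, z)] i).1 ∧
      p i (![dist x y, dist x z, dist y z] i) = (![(x, y), (x, z), (y, z)] i).2 ∧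
      ∀ t ∈ Set.Icc (0:ℝ) (![dist x y, dist x z, dist y z] i), p i t ∈ U) →
    ∀ xb yb zb : EuclideanSpace ℝ (Fin 2),
      dist xb yb = dist x y → dist xb zb = dist x z → dist yb zb = dist y z →
      ∀ i j : Fin 3, ∀ a b : ℝ,
        a ∈ Set.Icc (0:ℝ) (![dist x y, dist x z, dist y z] i) →
        b ∈ Set.Icc (0:ℝ) (![dist x y, dist x z, dist y z] j) →
        rel (dist (p i a) (p j b))
          (dist
            (![fun c : ℝ => AffineMap.lineMap xb yb (c / dist x y),
               fun c : ℝ => AffineMap.lineMap xb zb (c / dist x z),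
               fun c : ℝ => AffineMap.lineMap yb zb (c / dist y z)] i a)
            (![fun c : ℝ => AffineMap.lineMap xb yb (c / dist x y),
               fun c : ℝ => AffineMap.lineMap xb zb (c / dist x z),
               fun c : ℝ => AffineMap.lineMap yb zb (c / dist y z)] j b)))

/-- A region of curvature `≤ 0`. -/
def IsCurvLeRegion {X : Type*} [MetricSpace X] (U : Set X) : Prop :=
  IsCurvRegion (· ≤ ·) U

/-- A region of curvature `≥ 0`. -/
def IsCurvGeRegion {X : Type*} [MetricSpace X] (U : Set X) : Prop :=
  IsCurvRegion (· ≥ ·) U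

end

/-! In a region of curvature `≥ 0` the comparison angle `∠⁰_{γ 0}(γ t, σ s)` of two geodesics
issuing from one point is nonincreasing in `t` and in `s`: the hinge at `γ 0` is compared with a
Euclidean comparison triangle, in which moving a vertex along a side does not change the angle,
while the curvature condition makes the opposite side of the hinge at least as long as in the
plane. Hence every comparison angle at positive parameters is a lower bound for the upper angle.
For fixed small `t, s` the comparison angle of `γ, σ` is the limit of those of `γₙ, σₙ`, and for
large `n` the initial segments of `γₙ, σₙ` stay in one region of curvature `≥ 0` around `γ 0`, so
`∠⁰_{γ 0}(γ t, σ s) ≤ liminf ∠⁺(γₙ, σₙ)`; taking the limsup in `(t, s)` gives the claim. -/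

open EuclideanGeometry Real

section Euclidean

variable {V P : Type*} [NormedAddCommGroup V] [InnerProductSpace ℝ V] [MetricSpace P]
  [NormedAddTorsor V P]

-- Also for `x = p` or `y = p`: both sides are then `π / 2` (`arccos` of a quotient by zero).
theorem compAngle_eq_angle (p x y : P) : compAngle p x y = ∠ x p y := by
  rw [compAngle, EuclideanGeometry.angle, InnerProductGeometry.angle, dist_comm p x,
    dist_comm p y, dist_eq_norm_vsub V, dist_eq_norm_vsub V, dist_eq_norm_vsub V,
    ← vsub_sub_vsub_cancel_right x y p, norm_sub_sq_real]
  congr 1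
  rw [mul_assoc, ← mul_div_mul_left _ _ (two_ne_zero' ℝ)]
  ring_nf

theorem compAngle_lineMap_left (p x y : P) {r : ℝ} (hr : 0 < r) :
    compAngle p (AffineMap.lineMap p x r) y = compAngle p x y := by
  rw [compAngle_eq_angle, compAngle_eq_angle,
    angle_smul_left_of_pos y hr (AffineMap.lineMap_vsub_left p x r).symm]

end Euclidean

theorem exists_euclidean_plane_triangle {a b c : ℝ} (ha : 0 < a) (ha_le : a ≤ b + c)
    (hb_le : b ≤ a + c) (hc_le : c ≤ a + b) :
    ∃ x y z : EuclideanSpace ℝ (Fin 2), dist x y = a ∧ dist x z = b ∧ dist y z = c := by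
  set u := (a ^ 2 + b ^ 2 - c ^ 2) / (2 * a)
  have hau : 2 * a * u = a ^ 2 + b ^ 2 - c ^ 2 := mul_div_cancel₀ _ (by positivity)
  have hu : u ^ 2 ≤ b ^ 2 := by
    have h : (2 * a) ^ 2 * u ^ 2 ≤ (2 * a) ^ 2 * b ^ 2 := by
      rw [← mul_pow, ← mul_pow, hau]
      nlinarith [mul_nonneg (mul_nonneg (sub_nonneg.2 ha_le) (sub_nonneg.2 hb_le))
        (mul_nonneg (sub_nonneg.2 hc_le) (by linarith : (0:ℝ) ≤ a + b + c))]
    exact le_of_mul_le_mul_left h (by positivity)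
  have hv := Real.sq_sqrt (sub_nonneg.2 hu)
  refine ⟨!₂[0, 0], !₂[a, 0], !₂[u, √(b ^ 2 - u ^ 2)], ?_, ?_, ?_⟩ <;>
    simp only [EuclideanSpace.dist_eq, Fin.sum_univ_two, Real.dist_eq, sq_abs] <;> simp
  · exact Real.sqrt_sq ha.le
  · rw [hv, add_sub_cancel, Real.sqrt_sq (by linarith)]
  · rw [hv, show (a - u) ^ 2 + (b ^ 2 - u ^ 2) = c ^ 2 by linear_combination -hau,
      Real.sqrt_sq (by linarith)]

section Comparison

variable {X : Type*} [MetricSpace X]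

theorem compAngle_comm (p x y : X) : compAngle p x y = compAngle p y x := by
  rw [compAngle, compAngle, dist_comm x y, add_comm (dist p x ^ 2), mul_right_comm]

theorem compAngle_nonneg (p x y : X) : 0 ≤ compAngle p x y := Real.arccos_nonneg _

theorem compAngle_le_pi (p x y : X) : compAngle p x y ≤ π := Real.arccos_le_pi _

theorem compAngle_le_compAngle {Y : Type*} [MetricSpace Y] {p x y : X} {p' x' y' : Y}
    (hx : dist p' x' = dist p x) (hy : dist p' y' = dist p y) (hxy : dist x' y' ≤ dist x y) :
    compAngle p' x' y' ≤ compAngle p x y := by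
  rw [compAngle, compAngle, hx, hy]
  refine Real.antitone_arccos (div_le_div_of_nonneg_right ?_ (by positivity))
  gcongr

theorem Filter.Tendsto.compAngle {α : Type*} {l : Filter α} {p x y : α → X} {p₀ x₀ y₀ : X}
    (hp : Tendsto p l (𝓝 p₀)) (hx : Tendsto x l (𝓝 x₀)) (hy : Tendsto y l (𝓝 y₀))
    (hx₀ : p₀ ≠ x₀) (hy₀ : p₀ ≠ y₀) :
    Tendsto (fun n => compAngle (p n) (x n) (y n)) l (𝓝 (compAngle p₀ x₀ y₀)) := by
  have hpx := hp.dist hx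
  have hpy := hp.dist hy
  refine (Real.continuous_arccos.tendsto _).comp
    ((((hpx.pow 2).add (hpy.pow 2)).sub ((hx.dist hy).pow 2)).div
      ((tendsto_const_nhds.mul hpx).mul hpy) ?_)
  have := dist_pos.2 hx₀
  have := dist_pos.2 hy₀
  positivity

end Comparison

namespace IsUnitSpeedGeodesicOn

variable {X : Type*} [MetricSpace X] {γ : ℝ → X} {T t : ℝ}

theorem mono (hγ : IsUnitSpeedGeodesicOn γ T) {T' : ℝ} (hT' : T' ≤ T) :
    IsUnitSpeedGeodesicOn γ T' :=
  fun t ht t' ht' => hγ t ⟨ht.1, ht.2.trans hT'⟩ t' ⟨ht'.1, ht'.2.trans hT'⟩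

theorem dist_zero_apply (hγ : IsUnitSpeedGeodesicOn γ T) (ht : t ∈ Icc 0 T) :
    dist (γ 0) (γ t) = t := by
  rw [hγ 0 ⟨le_rfl, ht.1.trans ht.2⟩ t ht, zero_sub, abs_neg, abs_of_nonneg ht.1]

theorem apply_zero_ne (hγ : IsUnitSpeedGeodesicOn γ T) (ht : 0 < t) (htT : t ≤ T) :
    γ 0 ≠ γ t :=
  dist_pos.1 <| (hγ.dist_zero_apply ⟨ht.le, htT⟩).symm ▸ ht

theorem mapsTo_ball (hγ : IsUnitSpeedGeodesicOn γ T) (htT : t ≤ T) {p : X} {r : ℝ}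
    (hr : dist (γ 0) p + t < r) : MapsTo γ (Icc 0 t) (ball p r) := fun u hu =>
  calc dist (γ u) p ≤ dist (γ 0) (γ u) + dist (γ 0) p := dist_triangle_left _ _ _
    _ < r := by rw [hγ.dist_zero_apply ⟨hu.1, hu.2.trans htT⟩]; linarith [hu.2]

end IsUnitSpeedGeodesicOn

namespace IsCurvGeRegion

variable {X : Type*} [MetricSpace X] {U : Set X} {γ σ : ℝ → X}

theorem dist_lineMap_le (hU : IsCurvGeRegion U) {a b : ℝ} (hγ : IsUnitSpeedGeodesicOn γ a)
    (hσ : IsUnitSpeedGeodesicOn σ b) (h0 : γ 0 = σ 0) (hγU : MapsTo γ (Icc 0 a) U)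
    (hσU : MapsTo σ (Icc 0 b) U) {xb yb zb : EuclideanSpace ℝ (Fin 2)} (hxy : dist xb yb = a)
    (hxz : dist xb zb = b) (hyz : dist yb zb = dist (γ a) (σ b)) {t s : ℝ} (ht : t ∈ Icc 0 a)
    (hs : s ∈ Icc 0 b) :
    dist (AffineMap.lineMap xb yb (t / a)) (AffineMap.lineMap xb zb (s / b)) ≤
      dist (γ t) (σ s) := by
  have ha : a ∈ Icc 0 a := ⟨ht.1.trans ht.2, le_rfl⟩
  have hb : b ∈ Icc 0 b := ⟨hs.1.trans hs.2, le_rfl⟩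
  have hda : dist (γ 0) (γ a) = a := hγ.dist_zero_apply ha
  have hdb : dist (γ 0) (σ b) = b := h0 ▸ hσ.dist_zero_apply hb
  obtain ⟨g, hg, hg0, hg1, hgU⟩ := hU.1 (γ a) (hγU ha) (σ b) (hσU hb)
  have := hU.2 (γ 0) (hγU ⟨le_rfl, ha.1⟩) (γ a) (hγU ha) (σ b) (hσU hb) ![γ, σ, g] ?_ xb yb zb
    (by rw [hxy, hda]) (by rw [hxz, hdb]) hyz 0 1 t s (by simpa [hda]) (by simpa [hdb])
  · simpa [hda, hdb] using this
  · intro i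
    fin_cases i
    · simpa [hda] using ⟨hγ, fun u hu₀ hu₁ => hγU ⟨hu₀, hu₁⟩⟩
    · simpa [← h0, hdb] using ⟨hσ, fun u hu₀ hu₁ => hσU ⟨hu₀, hu₁⟩⟩
    · exact ⟨hg, hg0, hg1, hgU⟩

theorem compAngle_anti_left (hU : IsCurvGeRegion U) {t t' s : ℝ}
    (hγ : IsUnitSpeedGeodesicOn γ t') (hσ : IsUnitSpeedGeodesicOn σ s) (h0 : γ 0 = σ 0)
    (ht : 0 < t) (htt' : t ≤ t') (hs : 0 < s) (hγU : MapsTo γ (Icc 0 t') U)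
    (hσU : MapsTo σ (Icc 0 s) U) :
    compAngle (γ 0) (γ t') (σ s) ≤ compAngle (γ 0) (γ t) (σ s) := by
  have ht' : 0 < t' := ht.trans_le htt'
  have hdt : dist (γ 0) (γ t) = t := hγ.dist_zero_apply ⟨ht.le, htt'⟩
  have hdt' : dist (γ 0) (γ t') = t' := hγ.dist_zero_apply ⟨ht'.le, le_rfl⟩
  have hds : dist (γ 0) (σ s) = s := h0 ▸ hσ.dist_zero_apply ⟨hs.le, le_rfl⟩
  have h₁ := dist_triangle (γ 0) (σ s) (γ t')
  have h₂ := dist_triangle (γ 0) (γ t') (σ s)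
  have h₃ := dist_triangle_left (γ t') (σ s) (γ 0)
  rw [dist_comm (σ s)] at h₁
  obtain ⟨xb, yb, zb, hxy, hxz, hyz⟩ :=
    exists_euclidean_plane_triangle (b := s) (c := dist (γ t') (σ s)) ht' (by linarith)
      (by linarith) (by linarith)
  have hside := hU.dist_lineMap_le hγ hσ h0 hγU hσU hxy hxz hyz ⟨ht.le, htt'⟩ ⟨hs.le, le_rfl⟩
  rw [div_self hs.ne', AffineMap.lineMap_apply_one] at hside
  calc compAngle (γ 0) (γ t') (σ s) = compAngle xb yb zb := by
        rw [compAngle, compAngle, hxy, hxz, hyz, hdt', hds]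
    _ = compAngle xb (AffineMap.lineMap xb yb (t / t')) zb :=
        (compAngle_lineMap_left _ _ _ (by positivity)).symm
    _ ≤ compAngle (γ 0) (γ t) (σ s) := by
        refine compAngle_le_compAngle ?_ (by rw [hxz, hds]) hside
        rw [dist_left_lineMap, hxy, hdt, Real.norm_of_nonneg (by positivity),
          div_mul_cancel₀ _ ht'.ne']

theorem compAngle_anti (hU : IsCurvGeRegion U) {t t' s s' : ℝ}
    (hγ : IsUnitSpeedGeodesicOn γ t') (hσ : IsUnitSpeedGeodesicOn σ s') (h0 : γ 0 = σ 0)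
    (ht : 0 < t) (htt' : t ≤ t') (hs : 0 < s) (hss' : s ≤ s') (hγU : MapsTo γ (Icc 0 t') U)
    (hσU : MapsTo σ (Icc 0 s') U) :
    compAngle (γ 0) (γ t') (σ s') ≤ compAngle (γ 0) (γ t) (σ s) :=
  calc compAngle (γ 0) (γ t') (σ s') ≤ compAngle (γ 0) (γ t') (σ s) := by
        rw [compAngle_comm, compAngle_comm _ (γ t'), h0]
        exact hU.compAngle_anti_left hσ hγ h0.symm hs hss' (ht.trans_le htt') hσU hγU
    _ ≤ compAngle (γ 0) (γ t) (σ s) :=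
        hU.compAngle_anti_left hγ (hσ.mono hss') h0 ht htt' hs hγU
          (hσU.mono_left (Icc_subset_Icc_right hss'))

theorem compAngle_le_upperAngle (hU : IsCurvGeRegion U) {t s : ℝ}
    (hγ : IsUnitSpeedGeodesicOn γ t) (hσ : IsUnitSpeedGeodesicOn σ s) (h0 : γ 0 = σ 0)
    (ht : 0 < t) (hs : 0 < s) (hγU : MapsTo γ (Icc 0 t) U) (hσU : MapsTo σ (Icc 0 s) U) :
    compAngle (γ 0) (γ t) (σ s) ≤ upperAngle γ σ := by
  refine le_limsup_of_frequently_le (Eventually.frequently ?_)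
    (isBoundedUnder_of ⟨π, fun _ => compAngle_le_pi _ _ _⟩)
  filter_upwards [prod_mem_prod (Ioc_mem_nhdsGT ht) (Ioc_mem_nhdsGT hs)] with ⟨a, b⟩ ⟨ha, hb⟩
  exact hU.compAngle_anti hγ hσ h0 ha.1 ha.2 hb.1 hb.2 hγU hσU

end IsCurvGeRegion

theorem upperAngle_le_pi {X : Type*} [MetricSpace X] (γ η : ℝ → X) : upperAngle γ η ≤ π :=
  limsup_le_of_le (isBoundedUnder_of ⟨0, fun _ => compAngle_nonneg _ _ _⟩).isCoboundedUnder_le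
    (Eventually.of_forall fun _ => compAngle_le_pi _ _ _)

theorem angle_lower_semicontinuous_of_curvGe_general {X : Type*} [MetricSpace X]
    (hcurv : ∀ p : X, ∃ U ∈ 𝓝 p, IsCurvGeRegion U)
    {T S : ℝ} (hT : 0 < T) (hS : 0 < S)
    (γn : ℕ → ℝ → X) (γ : ℝ → X) (σn : ℕ → ℝ → X) (σ : ℝ → X)
    (hγn : ∀ n, IsUnitSpeedGeodesicOn (γn n) T)
    (hγ : IsUnitSpeedGeodesicOn γ T)
    (hσn : ∀ n, IsUnitSpeedGeodesicOn (σn n) S)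
    (hσ : IsUnitSpeedGeodesicOn σ S)
    (h0n : ∀ n, γn n 0 = σn n 0) (h0 : γ 0 = σ 0)
    (hγconv : TendstoUniformlyOn (fun n u => γn n u) γ atTop (Set.Icc 0 T))
    (hσconv : TendstoUniformlyOn (fun n u => σn n u) σ atTop (Set.Icc 0 S)) :
    upperAngle γ σ
      ≤ Filter.liminf (fun n => upperAngle (γn n) (σn n)) atTop := by
  obtain ⟨U, hU_nhds, hU⟩ := hcurv (γ 0)
  obtain ⟨ε, hε, hball⟩ := Metric.mem_nhds_iff.1 hU_nhds
  have hγ0 : Tendsto (fun n => γn n 0) atTop (𝓝 (γ 0)) := hγconv.tendsto_at ⟨le_rfl, hT.le⟩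
  refine limsup_le_of_le
    (isBoundedUnder_of ⟨0, fun _ => compAngle_nonneg _ _ _⟩).isCoboundedUnder_le ?_
  filter_upwards [prod_mem_prod (Ioc_mem_nhdsGT (lt_min (half_pos hε) hT))
    (Ioc_mem_nhdsGT (lt_min (half_pos hε) hS))] with ⟨t, s⟩ hts
  obtain ⟨⟨ht, htε, htT⟩, hs, hsε, hsS⟩ :
      (0 < t ∧ t ≤ ε / 2 ∧ t ≤ T) ∧ 0 < s ∧ s ≤ ε / 2 ∧ s ≤ S := by
    simpa only [mem_prod, mem_Ioc, le_min_iff] using hts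
  have hlim : Tendsto (fun n => compAngle (γn n 0) (γn n t) (σn n s)) atTop
      (𝓝 (compAngle (γ 0) (γ t) (σ s))) :=
    hγ0.compAngle (hγconv.tendsto_at ⟨ht.le, htT⟩) (hσconv.tendsto_at ⟨hs.le, hsS⟩)
      (hγ.apply_zero_ne ht htT) (h0 ▸ hσ.apply_zero_ne hs hsS)
  have hle : ∀ᶠ n in atTop,
      compAngle (γn n 0) (γn n t) (σn n s) ≤ upperAngle (γn n) (σn n) := by
    filter_upwards [hγ0 (ball_mem_nhds _ (half_pos hε))]
      with n (hγn0 : dist (γn n 0) (γ 0) < ε / 2)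
    have hσn0 : dist (σn n 0) (γ 0) < ε / 2 := h0n n ▸ hγn0
    exact hU.compAngle_le_upperAngle ((hγn n).mono htT) ((hσn n).mono hsS) (h0n n) ht hs
      (((hγn n).mapsTo_ball htT (by linarith)).mono_right hball)
      (((hσn n).mapsTo_ball hsS (by linarith)).mono_right hball)
  rw [← hlim.liminf_eq]
  exact liminf_le_liminf hle (isBoundedUnder_of ⟨0, fun _ => compAngle_nonneg _ _ _⟩)
    (isBoundedUnder_of ⟨π, fun _ => upperAngle_le_pi _ _⟩).isCoboundedUnder_ge

/-- Proposition 3.4, curvature `≥ 0` case: lower semicontinuity of angles. -/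
theorem angle_lower_semicontinuous_of_curvGe {X : Type*} [MetricSpace X]
    [ProperSpace X]
    (hgeo : ∀ x y : X, ∃ γ : ℝ → X, IsUnitSpeedGeodesicOn γ (dist x y) ∧
      γ 0 = x ∧ γ (dist x y) = y)
    (hcurv : ∀ p : X, ∃ U ∈ 𝓝 p, IsCurvGeRegion U)
    {T S : ℝ} (hT : 0 < T) (hS : 0 < S)
    (γn : ℕ → ℝ → X) (γ : ℝ → X) (σn : ℕ → ℝ → X) (σ : ℝ → X)
    (hγn : ∀ n, IsUnitSpeedGeodesicOn (γn n) T)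
    (hγ : IsUnitSpeedGeodesicOn γ T)
    (hσn : ∀ n, IsUnitSpeedGeodesicOn (σn n) S)
    (hσ : IsUnitSpeedGeodesicOn σ S)
    (h0n : ∀ n, γn n 0 = σn n 0) (h0 : γ 0 = σ 0)
    (hγconv : TendstoUniformlyOn (fun n u => γn n u) γ atTop (Set.Icc 0 T))
    (hσconv : TendstoUniformlyOn (fun n u => σn n u) σ atTop (Set.Icc 0 S)) :
    upperAngle γ σ
      ≤ Filter.liminf (fun n => upperAngle (γn n) (σn n)) atTop :=
  angle_lower_semicontinuous_of_curvGe_general hcurv hT hS γn γ σn σ hγn hγ hσn hσ h0n h0 hγconv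
    hσconv
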